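/- Assume that for each i ∈ {1, 2}: F_i refines F_{3−i} in every CKC; every F_i-loop is F_{3−i}-covered; and every irreducible F_i-loop with at least 6 states is, as the same sequence of states, an irreducible F_{3−i}-loop. Then every type-2 irreducible F₁-loop (ω_1, ω̄_1, …, ω_m, ω̄_m) is also an F₂-loop, i.e., ω_{j+1} ∈ F₂(ω̄_j) for every j (indices cyclic). -/
import Mathlib


open scoped Classical

namespace Oracles

variable {Ω : Type}

/-- Two states lie in the same common knowledge component (CKC) iff they are related
by the join (finest common coarsening) of the players' information partitions. -/
def ckcRel {n : ℕ} (Pl : Fin n → Setoid Ω) (ω ω' : Ω) : Prop :=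
  (⨆ i, Pl i).r ω ω'

/-- An `F`-loop: a cyclic sequence of `m ≥ 2` pairs of states `(x j, y j)`. -/
structure IsLoop {n : ℕ} (Pl : Fin n → Setoid Ω) (F : Setoid Ω)
    (m : ℕ) (x y : ZMod m → Ω) : Prop where
  two_le : 2 ≤ m
  pair_ne : ∀ j, x j ≠ y j
  pair_ckc : ∀ j, ckcRel Pl (x j) (y j)
  link : ∀ j, F.r (y j) (x (j + 1))
  ckc_ne : ∀ j, ¬ ckcRel Pl (x j) (x (j + 1))
  link_disjoint : ∀ j k : ZMod m, j ≠ k →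
    ({y j, x (j + 1)} : Set Ω) ∩ {y k, x (k + 1)} = ∅

/-- The set of states of a loop. -/
def loopStates {m : ℕ} (x y : ZMod m → Ω) : Set Ω :=
  Set.range x ∪ Set.range y

/-- `F` refines `F'` in every CKC. -/
def RefinesInCKC {n : ℕ} (Pl : Fin n → Setoid Ω) (F F' : Setoid Ω) : Prop :=
  ∀ ω ω', ckcRel Pl ω ω' → F.r ω ω' → F'.r ω ω'

/-- A loop is `F'`-non-informative if both states of each of its pairs lie in the
same block of `F'`. -/
def NonInformative (F' : Setoid Ω) {m : ℕ} (x y : ZMod m → Ω) : Prop :=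
  ∀ j, F'.r (x j) (y j)

/-- A loop is `F'`-fully-informative if the states of each pair lie in different
blocks of `F'`. -/
def FullyInformative (F' : Setoid Ω) {m : ℕ} (x y : ZMod m → Ω) : Prop :=
  ∀ j, ¬ F'.r (x j) (y j)

/-- A loop is `F'`-informative if the states of at least one pair lie in different
blocks of `F'`. -/
def Informative (F' : Setoid Ω) {m : ℕ} (x y : ZMod m → Ω) : Prop :=
  ∃ j, ¬ F'.r (x j) (y j)

/-- A loop is irreducible if no strict subset of its set of states forms an `F`-loop. -/
def IsIrreducible {n : ℕ} (Pl : Fin n → Setoid Ω) (F : Setoid Ω)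
    {m : ℕ} (x y : ZMod m → Ω) : Prop :=
  ¬ ∃ (m' : ℕ) (x' y' : ZMod m' → Ω),
      IsLoop Pl F m' x' y' ∧ loopStates x' y' ⊂ loopStates x y

/-- A loop is type-2 irreducible if no four distinct states of the loop lie in the
same block of `F`. -/
def Type2Irreducible (F : Setoid Ω) {m : ℕ} (x y : ZMod m → Ω) : Prop :=
  ¬ ∃ a b c d : Ω,
      a ∈ loopStates x y ∧ b ∈ loopStates x y ∧ c ∈ loopStates x y ∧
        d ∈ loopStates x y ∧
      a ≠ b ∧ a ≠ c ∧ a ≠ d ∧ b ≠ c ∧ b ≠ d ∧ c ≠ d ∧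
      F.r a b ∧ F.r a c ∧ F.r a d

/-- A loop is `F'`-balanced if for every partition of its set of states into two
disjoint `F'`-measurable sets `A` and `B`, the number of transitions from `A` to `B`
equals the number of transitions from `B` to `A`. -/
def Balanced (F' : Setoid Ω) {m : ℕ} (x y : ZMod m → Ω) : Prop :=
  ∀ A B : Set Ω,
    A ∪ B = loopStates x y → A ∩ B = ∅ →
    (∀ ω ω', ω ∈ loopStates x y → ω' ∈ loopStates x y → F'.r ω ω' →
      (ω ∈ A ↔ ω' ∈ A)) →
    Nat.card {j : ZMod m // x j ∈ A ∧ y j ∈ B} =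
      Nat.card {j : ZMod m // x j ∈ B ∧ y j ∈ A}

/-- A loop is `F'`-covered if its index set can be partitioned into the set
`J = {j : x j ∈ F'(y j)}` together with classes each of which, arranged in a
suitable cyclic order, forms an `F'`-loop. -/
def Covered {n : ℕ} (Pl : Fin n → Setoid Ω) (F' : Setoid Ω)
    {m : ℕ} (x y : ZMod m → Ω) : Prop :=
  ∃ (r : ℕ) (I : Fin r → Set (ZMod m)),
    (Pairwise fun t t' => Disjoint (I t) (I t')) ∧
    (⋃ t, I t) = {j | ¬ F'.r (x j) (y j)} ∧
    ∀ t, ∃ (mt : ℕ) (e : ZMod mt → ZMod m),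
      Function.Injective e ∧ Set.range e = I t ∧
      IsLoop Pl F' mt (x ∘ e) (y ∘ e)


/-- The one-sided equivalence conditions for the ordered pair of partitions
`(F, F')`: refinement in every CKC, every `F`-loop is `F'`-covered, and every
irreducible `F`-loop with at least 6 states is (as the same sequence of states)
an irreducible `F'`-loop. -/
def OneSideConds {n : ℕ} (Pl : Fin n → Setoid Ω) (F F' : Setoid Ω) : Prop :=
  RefinesInCKC Pl F F' ∧
  (∀ (m : ℕ) (x y : ZMod m → Ω), IsLoop Pl F m x y → Covered Pl F' x y) ∧
  ∀ (m : ℕ) (x y : ZMod m → Ω), IsLoop Pl F m x y → IsIrreducible Pl F x y →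
    3 ≤ m → IsLoop Pl F' m x y ∧ IsIrreducible Pl F' x y


section Aux

variable {n : ℕ} {Pl : Fin n → Setoid Ω} {F F₁ F₂ : Setoid Ω}

lemma ckc_refl (a : Ω) : ckcRel Pl a a := (⨆ i, Pl i).iseqv.refl a

lemma ckc_symm {a b : Ω} (h : ckcRel Pl a b) : ckcRel Pl b a := (⨆ i, Pl i).iseqv.symm h

lemma ckc_trans {a b c : Ω} (h : ckcRel Pl a b) (h' : ckcRel Pl b c) : ckcRel Pl a c :=
  (⨆ i, Pl i).iseqv.trans h h'

variable {m : ℕ} {x y : ZMod m → Ω}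

/-- In any loop, no `x` state equals a `y` state. -/
lemma loop_x_ne_y (hl : IsLoop Pl F m x y) : ∀ a b : ZMod m, x a ≠ y b := by
  intro a b h
  by_cases hab : a = b + 1
  · subst hab
    exact hl.ckc_ne b (h ▸ hl.pair_ckc b)
  · have hd := hl.link_disjoint b (a - 1) (by
      intro hba; apply hab; rw [hba]; rw [sub_add_cancel])
    have : y b ∈ ({y b, x (b + 1)} : Set Ω) ∩ {y (a-1), x (a - 1 + 1)} := by
      constructor
      · left; rfl
      · right; show y b = x (a - 1 + 1); rw [sub_add_cancel]; exact h.symm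
    rw [hd] at this
    exact this

lemma loop_x_inj (hl : IsLoop Pl F m x y) : Function.Injective x := by
  intro a a' h
  by_contra hne
  have hd := hl.link_disjoint (a - 1) (a' - 1) (by
    intro hh; apply hne; have := congrArg (· + 1) hh; simpa [sub_add_cancel] using this)
  have : x a ∈ ({y (a-1), x (a - 1 + 1)} : Set Ω) ∩ {y (a'-1), x (a' - 1 + 1)} := by
    constructor
    · right; show x a = x (a - 1 + 1); rw [sub_add_cancel]
    · right; show x a = x (a' - 1 + 1); rw [sub_add_cancel]; exact h
  rw [hd] at this
  exact this

lemma loop_y_inj (hl : IsLoop Pl F m x y) : Function.Injective y := by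
  intro a a' h
  by_contra hne
  have hd := hl.link_disjoint a a' hne
  have : y a ∈ ({y a, x (a + 1)} : Set Ω) ∩ {y a', x (a' + 1)} := by
    exact ⟨Or.inl rfl, Or.inl h⟩
  rw [hd] at this
  exact this

lemma loop_link_ne (hl : IsLoop Pl F m x y) (k : ZMod m) : y k ≠ x (k + 1) :=
  fun h => (loop_x_ne_y hl (k+1) k) h.symm

end Aux

section Cell

variable {n : ℕ} {Pl : Fin n → Setoid Ω} {F F₁ F₂ : Setoid Ω}
variable {m : ℕ} {x y : ZMod m → Ω}

lemma mem_loopStates_x (a : ZMod m) : x a ∈ loopStates x y := Or.inl ⟨a, rfl⟩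
lemma mem_loopStates_y (a : ZMod m) : y a ∈ loopStates x y := Or.inr ⟨a, rfl⟩

/-- Key structural lemma: two distinct `F₁`-related states of a type-2 irreducible
loop form a "cell" `{y c, x (c+1)}`. -/
lemma cell (hl : IsLoop Pl F₁ m x y) (ht2 : Type2Irreducible F₁ x y)
    {s t : Ω} (hs : s ∈ loopStates x y) (ht : t ∈ loopStates x y)
    (hne : s ≠ t) (hr : F₁.r s t) :
    ∃ c, (s = y c ∧ t = x (c + 1)) ∨ (s = x (c + 1) ∧ t = y c) := by
  have hxy := loop_x_ne_y hl
  have hxinj := loop_x_inj hl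
  have hyinj := loop_y_inj hl
  -- partner relations
  have hplink : ∀ i : ZMod m, F₁.r (y (i - 1)) (x i) := by
    intro i; have := hl.link (i - 1); rwa [sub_add_cancel] at this
  rcases hs with ⟨i, rfl⟩ | ⟨i, rfl⟩ <;> rcases ht with ⟨i', rfl⟩ | ⟨i', rfl⟩
  · -- s = x i, t = x i' : contradiction
    exfalso
    have hii : i ≠ i' := fun h => hne (congrArg x h)
    refine ht2 ⟨x i, y (i - 1), x i', y (i' - 1), mem_loopStates_x i, mem_loopStates_y _,
      mem_loopStates_x i', mem_loopStates_y _, ?_, ?_, ?_, ?_, ?_, ?_, ?_, ?_, ?_⟩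
    · exact fun h => hxy _ _ h
    · exact fun h => hii (hxinj h)
    · exact fun h => hxy _ _ h
    · exact fun h => (hxy _ _ h.symm)
    · intro h; apply hii
      have h2 := congrArg (· + 1) (hyinj h); simpa [sub_add_cancel] using h2
    · exact fun h => hxy _ _ h
    · exact F₁.iseqv.symm (hplink i)
    · exact hr
    · exact F₁.iseqv.trans hr (F₁.iseqv.symm (hplink i'))
  · -- s = x i, t = y i'
    by_cases hcase : i = i' + 1
    · exact ⟨i', Or.inr ⟨congrArg x hcase, rfl⟩⟩
    · exfalso
      refine ht2 ⟨x i, y (i - 1), y i', x (i' + 1), mem_loopStates_x i, mem_loopStates_y _,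
        mem_loopStates_y i', mem_loopStates_x _, ?_, ?_, ?_, ?_, ?_, ?_, ?_, ?_, ?_⟩
      · exact fun h => hxy _ _ h
      · exact fun h => hxy _ _ h
      · exact fun h => hcase (hxinj h)
      · intro h; apply hcase; rw [← hyinj h, sub_add_cancel]
      · exact fun h => hxy _ _ h.symm
      · exact fun h => hxy _ _ h.symm
      · exact F₁.iseqv.symm (hplink i)
      · exact hr
      · exact F₁.iseqv.trans hr (hl.link i')
  · -- s = y i, t = x i'
    by_cases hcase : i' = i + 1
    · exact ⟨i, Or.inl ⟨rfl, congrArg x hcase⟩⟩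
    · exfalso
      refine ht2 ⟨y i, x (i + 1), x i', y (i' - 1), mem_loopStates_y i, mem_loopStates_x _,
        mem_loopStates_x i', mem_loopStates_y _, ?_, ?_, ?_, ?_, ?_, ?_, ?_, ?_, ?_⟩
      · exact fun h => hxy _ _ h.symm
      · exact fun h => hxy _ _ h.symm
      · intro h; have h2 := hyinj h; apply hcase; rw [h2, sub_add_cancel]
      · exact fun h => hcase ((hxinj h).symm)
      · exact fun h => hxy _ _ h
      · exact fun h => hxy _ _ h
      · exact hl.link i
      · exact hr
      · exact F₁.iseqv.trans hr (F₁.iseqv.symm (hplink i'))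
  · -- s = y i, t = y i' : contradiction
    exfalso
    have hii : i ≠ i' := fun h => hne (congrArg y h)
    refine ht2 ⟨y i, x (i + 1), y i', x (i' + 1), mem_loopStates_y i, mem_loopStates_x _,
      mem_loopStates_y i', mem_loopStates_x _, ?_, ?_, ?_, ?_, ?_, ?_, ?_, ?_, ?_⟩
    · exact fun h => hxy _ _ h.symm
    · exact fun h => hii (hyinj h)
    · exact fun h => hxy _ _ h.symm
    · exact fun h => hxy _ _ h
    · exact fun h => hii (by have : i + 1 = i' + 1 := hxinj h; exact add_right_cancel this)
    · exact fun h => hxy _ _ h.symm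
    · exact hl.link i
    · exact hr
    · exact F₁.iseqv.trans hr (hl.link i')

end Cell

section Tools

variable {n : ℕ} {Pl : Fin n → Setoid Ω} {F F' F₁ F₂ : Setoid Ω}
variable {m : ℕ} {x y : ZMod m → Ω}

lemma one_ne_zero_zmod (hm : 2 ≤ m) : (1 : ZMod m) ≠ 0 := by
  haveI : NeZero m := ⟨by omega⟩
  haveI : Fact (1 < m) := ⟨by omega⟩
  intro h
  have h1 : (1 : ZMod m).val = 1 := ZMod.val_one m
  rw [h, ZMod.val_zero] at h1
  exact absurd h1 (by omega)

/-- Pairs of a type-2 irreducible loop are never `F₁`-trivial. -/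
lemma pair_not_F1 (hl : IsLoop Pl F₁ m x y) (ht2 : Type2Irreducible F₁ x y)
    (j : ZMod m) : ¬ F₁.r (x j) (y j) := by
  intro h
  obtain ⟨c, hc⟩ := cell hl ht2 (mem_loopStates_x j) (mem_loopStates_y j) (hl.pair_ne j) h
  rcases hc with ⟨h1, _⟩ | ⟨h1, h2⟩
  · exact loop_x_ne_y hl _ _ h1
  · have hj1 : j = c + 1 := loop_x_inj hl h1
    have hj2 : j = c := loop_y_inj hl h2
    apply one_ne_zero_zmod hl.two_le
    have : c + 1 = c := hj1 ▸ hj2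
    have := congrArg (· - c) this
    simpa [add_sub_cancel_left] using this

lemma pair_not_F2 (hl : IsLoop Pl F₁ m x y) (ht2 : Type2Irreducible F₁ x y)
    (hr21 : RefinesInCKC Pl F₂ F₁) (j : ZMod m) : ¬ F₂.r (x j) (y j) :=
  fun h => pair_not_F1 hl ht2 j (hr21 _ _ (hl.pair_ckc j) h)

lemma t2_mono {m' : ℕ} {x' y' : ZMod m' → Ω}
    (hsub : loopStates x' y' ⊆ loopStates x y) (ht2 : Type2Irreducible F₁ x y) :
    Type2Irreducible F₁ x' y' := by
  rintro ⟨a, b, c, d, ha, hb, hc, hd, rest⟩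
  exact ht2 ⟨a, b, c, d, hsub ha, hsub hb, hsub hc, hsub hd, rest⟩

/-- From a cover with all pairs nontrivial, extract a covering sub-loop through a
given index. -/
lemma cover_full {p : ℕ} {u v : ZMod p → Ω}
    (hcov : Covered Pl F' u v) (hNT : ∀ k, ¬ F'.r (u k) (v k)) (k₀ : ZMod p) :
    ∃ (q : ℕ) (e : ZMod q → ZMod p) (k' : ZMod q),
      Function.Injective e ∧ e k' = k₀ ∧ IsLoop Pl F' q (u ∘ e) (v ∘ e) := by
  obtain ⟨r, I, -, hU, hL⟩ := hcov
  have hk : k₀ ∈ ⋃ t, I t := by rw [hU]; exact hNT k₀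
  obtain ⟨t, ht⟩ := Set.mem_iUnion.1 hk
  obtain ⟨q, e, hinj, hrange, hloop⟩ := hL t
  rw [← hrange] at ht
  obtain ⟨k', hk'⟩ := ht
  exact ⟨q, e, k', hinj, hk', hloop⟩

/-- An injective "successor-compatible" map `ZMod p → ZMod m` forces `p = m` and is
surjective. -/
lemma succ_map_full {p : ℕ} (hp : 2 ≤ p) (hm : 2 ≤ m) (γ : ZMod p → ZMod m)
    (hinj : Function.Injective γ) (hsucc : ∀ k, γ (k + 1) = γ k + 1) :
    p = m ∧ Function.Surjective γ := by
  haveI : NeZero p := ⟨by omega⟩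
  haveI : NeZero m := ⟨by omega⟩
  have hn : ∀ nn : ℕ, γ ((nn : ZMod p)) = γ 0 + (nn : ZMod m) := by
    intro nn
    induction nn with
    | zero => simp
    | succ k ih => push_cast; rw [hsucc, ih]; ring
  have hp0 : ((p : ZMod m)) = 0 := by
    have := hn p
    rw [ZMod.natCast_self] at this
    have : γ 0 + 0 = γ 0 + (p : ZMod m) := by simpa using this
    exact (add_left_cancel this).symm
  have hdvd : m ∣ p := (ZMod.natCast_eq_zero_iff p m).1 hp0
  have hle : p ≤ m := by
    have := Fintype.card_le_of_injective γ hinj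
    simpa [ZMod.card] using this
  have hpm : p = m := le_antisymm hle (Nat.le_of_dvd (by omega) hdvd)
  subst hpm
  exact ⟨rfl, (Finite.injective_iff_surjective).1 hinj⟩

end Tools

section Rigid

variable {n : ℕ} {Pl : Fin n → Setoid Ω} {F₁ F₂ : Setoid Ω}
variable {m : ℕ} {x y : ZMod m → Ω}

/-- Rigidity: any `F₁`-loop whose pairs are pairs of a type-2 irreducible `F₁`-loop
must be the full loop, traversed forwards or backwards. -/
lemma rigid (hl1 : IsLoop Pl F₁ m x y) (ht2 : Type2Irreducible F₁ x y)
    {p : ℕ} {u v : ZMod p → Ω} (hl : IsLoop Pl F₁ p u v) (γ : ZMod p → ZMod m)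
    (hform : ∀ k, (u k = x (γ k) ∧ v k = y (γ k)) ∨ (u k = y (γ k) ∧ v k = x (γ k))) :
    p = m ∧ Function.Surjective γ ∧
      ((∀ k, (u k = x (γ k) ∧ v k = y (γ k)) ∧ γ (k + 1) = γ k + 1) ∨
       (∀ k, (u k = y (γ k) ∧ v k = x (γ k)) ∧ γ (k + 1) = γ k - 1)) := by
  haveI : NeZero p := ⟨by have := hl.two_le; omega⟩
  have hxy := loop_x_ne_y hl1
  have hxinj := loop_x_inj hl1
  have hyinj := loop_y_inj hl1
  have humem : ∀ k, u k ∈ loopStates x y := by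
    intro k; rcases hform k with ⟨h, -⟩ | ⟨h, -⟩
    · rw [h]; exact mem_loopStates_x _
    · rw [h]; exact mem_loopStates_y _
  have hvmem : ∀ k, v k ∈ loopStates x y := by
    intro k; rcases hform k with ⟨-, h⟩ | ⟨-, h⟩
    · rw [h]; exact mem_loopStates_y _
    · rw [h]; exact mem_loopStates_x _
  have hlkne : ∀ k, v k ≠ u (k + 1) := fun k => loop_link_ne hl k
  -- forward step
  have hF : ∀ k, v k = y (γ k) →
      (u (k+1) = x (γ (k+1)) ∧ v (k+1) = y (γ (k+1))) ∧ γ (k+1) = γ k + 1 := by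
    intro k hv
    obtain ⟨c, hc⟩ := cell hl1 ht2 (hvmem k) (humem (k+1)) (hlkne k) (hl.link k)
    rcases hc with ⟨h1, h2⟩ | ⟨h1, h2⟩
    · -- v k = y c, u (k+1) = x (c+1)
      rw [hv] at h1
      have hcγ : γ k = c := hyinj h1
      rcases hform (k+1) with ⟨h3, h4⟩ | ⟨h3, h4⟩
      · have : x (γ (k+1)) = x (c + 1) := by rw [← h3, h2]
        have hsucc : γ (k+1) = γ k + 1 := by rw [hcγ]; exact hxinj this
        exact ⟨⟨h3, h4⟩, hsucc⟩
      · exfalso; apply hxy (c+1) (γ (k+1)); rw [← h2, h3]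
    · exfalso; apply hxy (c+1) (γ k); rw [← h1, hv]
  -- backward step
  have hR : ∀ k, v k = x (γ k) →
      (u (k+1) = y (γ (k+1)) ∧ v (k+1) = x (γ (k+1))) ∧ γ (k+1) = γ k - 1 := by
    intro k hv
    obtain ⟨c, hc⟩ := cell hl1 ht2 (hvmem k) (humem (k+1)) (hlkne k) (hl.link k)
    rcases hc with ⟨h1, h2⟩ | ⟨h1, h2⟩
    · exfalso; apply hxy (γ k) c; rw [← hv, h1]
    · -- v k = x (c+1), u (k+1) = y c
      rw [hv] at h1
      have hcγ : γ k = c + 1 := hxinj h1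
      have hc' : c = γ k - 1 := by rw [hcγ]; ring
      rcases hform (k+1) with ⟨h3, h4⟩ | ⟨h3, h4⟩
      · exfalso; apply hxy (γ (k+1)) c; rw [← h3, h2]
      · have : y (γ (k+1)) = y c := by rw [← h3, h2]
        have hsucc : γ (k+1) = γ k - 1 := by rw [← hc']; exact hyinj this
        exact ⟨⟨h3, h4⟩, hsucc⟩
  have hcast : ∀ k : ZMod p, ((k.val : ZMod p)) = k := fun k => ZMod.natCast_rightInverse k
  rcases hform 0 with ⟨hu0, hv0⟩ | ⟨hu0, hv0⟩
  · -- forward everywhere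
    have hall : ∀ nn : ℕ, v ((nn : ZMod p)) = y (γ ((nn : ZMod p))) := by
      intro nn
      induction nn with
      | zero => simpa using hv0
      | succ k ih =>
        have := (hF _ ih).1.2
        push_cast
        convert this using 2 <;> push_cast <;> ring
    have hv : ∀ k, v k = y (γ k) := by
      intro k; have := hall k.val; rwa [hcast k] at this
    have hsucc : ∀ k, γ (k+1) = γ k + 1 := fun k => (hF k (hv k)).2
    have hu : ∀ k, u k = x (γ k) := by
      intro k
      rcases hform k with ⟨h, -⟩ | ⟨-, h⟩
      · exact h
      · exfalso; apply hxy (γ k) (γ k); rw [← h, hv k]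
    have hγinj : Function.Injective γ := by
      intro a b h
      exact loop_y_inj hl (by rw [hv a, hv b, h])
    obtain ⟨hpm, hsurj⟩ := succ_map_full hl.two_le hl1.two_le γ hγinj hsucc
    exact ⟨hpm, hsurj, Or.inl (fun k => ⟨⟨hu k, hv k⟩, hsucc k⟩)⟩
  · -- backward everywhere
    have hall : ∀ nn : ℕ, v ((nn : ZMod p)) = x (γ ((nn : ZMod p))) := by
      intro nn
      induction nn with
      | zero => simpa using hv0
      | succ k ih =>
        have := (hR _ ih).1.2
        push_cast
        convert this using 2 <;> push_cast <;> ring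
    have hv : ∀ k, v k = x (γ k) := by
      intro k; have := hall k.val; rwa [hcast k] at this
    have hsucc : ∀ k, γ (k+1) = γ k - 1 := fun k => (hR k (hv k)).2
    have hu : ∀ k, u k = y (γ k) := by
      intro k
      rcases hform k with ⟨-, h⟩ | ⟨h, -⟩
      · exfalso; apply hxy (γ k) (γ k); rw [← h, hv k]
      · exact h
    have hγinj : Function.Injective γ := by
      intro a b h
      exact loop_y_inj hl (by rw [hv a, hv b, h])
    have hηsucc : ∀ k, (fun k => -γ k) (k+1) = (fun k => -γ k) k + 1 := by
      intro k; simp only; rw [hsucc k]; ring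
    obtain ⟨hpm, hsurj⟩ := succ_map_full hl.two_le hl1.two_le (fun k => -γ k)
      (fun a b h => hγinj (by simpa using congrArg Neg.neg h)) hηsucc
    refine ⟨hpm, ?_, Or.inr (fun k => ⟨⟨hu k, hv k⟩, hsucc k⟩)⟩
    intro b
    obtain ⟨a, ha⟩ := hsurj (-b)
    exact ⟨a, by have := congrArg Neg.neg ha; simpa using this⟩

end Rigid

section Chord

variable {n : ℕ} {Pl : Fin n → Setoid Ω} {F₁ F₂ : Setoid Ω}
variable {m : ℕ} {x y : ZMod m → Ω}

/-- Surgery: a CKC coincidence between two non-adjacent pairs yields a strictly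
shorter `F₁`-loop covering the arc of links from `γ` to `δ - 1`. -/
lemma chord_loop (hl : IsLoop Pl F₁ m x y) {γ δ : ZMod m}
    (hck : ckcRel Pl (x γ) (x δ)) (h1 : δ ≠ γ) (h2 : δ ≠ γ + 1) :
    2 ≤ (δ - γ).val ∧ (δ - γ).val < m ∧
    ∃ x' y' : ZMod ((δ - γ).val) → Ω, IsLoop Pl F₁ ((δ - γ).val) x' y' ∧
      loopStates x' y' ⊆ loopStates x y ∧
      ∀ k : ZMod ((δ - γ).val),
        y' k = y (γ + (k.val : ZMod m)) ∧ x' (k + 1) = x (γ + (k.val : ZMod m) + 1) := by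
  have hm2 : 2 ≤ m := hl.two_le
  haveI : NeZero m := ⟨by omega⟩
  set d := (δ - γ).val with hd
  have hdcast : ((d : ZMod m)) = δ - γ := ZMod.natCast_rightInverse _
  have hdm : d < m := ZMod.val_lt _
  have hd0 : d ≠ 0 := by
    intro h
    apply h1
    have : ((d : ZMod m)) = 0 := by rw [h]; simp
    rw [hdcast] at this
    have := congrArg (· + γ) this
    simpa [sub_add_cancel] using this
  have hd1 : d ≠ 1 := by
    intro h
    apply h2
    have hh : ((d : ZMod m)) = 1 := by rw [h]; simp
    rw [hdcast] at hh
    have hh2 := congrArg (· + γ) hh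
    simp only [sub_add_cancel] at hh2
    rw [hh2, add_comm]
  have hd2 : 2 ≤ d := by omega
  haveI : NeZero d := ⟨hd0⟩
  refine ⟨hd2, hdm, ?_⟩
  set x' : ZMod d → Ω := fun k => if k = 0 then x δ else x (γ + (k.val : ZMod m)) with hx'
  set y' : ZMod d → Ω := fun k => y (γ + (k.val : ZMod m)) with hy'
  -- key: `k + 1 = 0` iff `k.val = d - 1`
  have hvd1 : ∀ k : ZMod d, k + 1 = 0 ↔ k.val = d - 1 := by
    intro k
    constructor
    · intro h
      have hk : k = -1 := by
        have := congrArg (· - 1) h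
        simpa [add_sub_cancel_right] using this
      have hneg : (-1 : ZMod d) = ((d - 1 : ℕ) : ZMod d) := by
        push_cast [Nat.cast_sub (by omega : 1 ≤ d)]
        simp
      rw [hk, hneg, ZMod.val_cast_of_lt (by omega)]
    · intro h
      have : k = ((d - 1 : ℕ) : ZMod d) := by
        conv_lhs => rw [← ZMod.natCast_rightInverse k]
        rw [h]
      rw [this]
      push_cast [Nat.cast_sub (by omega : 1 ≤ d)]
      simp
  have hx'succ : ∀ k : ZMod d, x' (k + 1) = x (γ + (k.val : ZMod m) + 1) := by
    intro k
    by_cases h : k + 1 = 0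
    · rw [h]
      have hk : k.val = d - 1 := (hvd1 k).1 h
      simp only [hx', if_pos rfl]
      congr 1
      rw [hk]
      have : ((d - 1 : ℕ) : ZMod m) + 1 = ((d : ℕ) : ZMod m) := by
        push_cast [Nat.cast_sub (by omega : 1 ≤ d)]; ring
      rw [add_assoc, this, hdcast]
      ring
    · have hkv : (k + 1).val = k.val + 1 := by
        have hklt : k.val + 1 < d := by
          have := ZMod.val_lt k
          rcases Nat.lt_or_ge (k.val + 1) d with h' | h'
          · exact h'
          · exfalso; apply h; apply (hvd1 k).2; omega
        have : k + 1 = ((k.val + 1 : ℕ) : ZMod d) := by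
          push_cast
          rw [ZMod.natCast_rightInverse k]
        rw [this, ZMod.val_cast_of_lt hklt]
      simp only [hx', if_neg h]
      rw [hkv]
      push_cast
      congr 1
      ring
  have hidx_inj : ∀ j k : ZMod d, j ≠ k → γ + (j.val : ZMod m) ≠ γ + (k.val : ZMod m) := by
    intro j k hjk h
    apply hjk
    have h2' : ((j.val : ZMod m)) = ((k.val : ZMod m)) := by
      have := congrArg (· - γ) h
      simpa using this
    have : j.val = k.val := by
      have := congrArg ZMod.val h2'
      rwa [ZMod.val_cast_of_lt (lt_trans (ZMod.val_lt j) (by omega)),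
        ZMod.val_cast_of_lt (lt_trans (ZMod.val_lt k) (by omega))] at this
    exact ZMod.val_injective _ this
  refine ⟨x', y', ?_, ?_, fun k => ⟨rfl, hx'succ k⟩⟩
  · constructor
    · exact hd2
    · -- pair_ne
      intro k
      by_cases h : k = 0
      · subst h
        simp only [hx', hy', if_pos rfl]
        exact fun h => loop_x_ne_y hl _ _ h
      · simp only [hx', hy', if_neg h]
        exact hl.pair_ne _
    · -- pair_ckc
      intro k
      by_cases h : k = 0
      · subst h
        simp only [hx', hy', if_pos rfl]
        have h0 : ((0 : ZMod d).val : ZMod m) = 0 := by simp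
        rw [h0, add_zero]
        exact ckc_trans (ckc_symm hck) (hl.pair_ckc γ)
      · simp only [hx', hy', if_neg h]
        exact hl.pair_ckc _
    · -- link
      intro k
      rw [hx'succ k]
      simp only [hy']
      exact hl.link _
    · -- ckc_ne
      intro k
      rw [hx'succ k]
      by_cases h : k = 0
      · subst h
        simp only [hx', if_pos rfl]
        intro hc
        apply hl.ckc_ne γ
        have h0 : ((0 : ZMod d).val : ZMod m) = 0 := by simp
        rw [h0, add_zero] at hc
        exact ckc_trans hck hc
      · simp only [hx', if_neg h]
        exact hl.ckc_ne _
    · -- link_disjoint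
      intro j k hjk
      have hset : ∀ k : ZMod d, ({y' k, x' (k + 1)} : Set Ω) =
          {y (γ + (k.val : ZMod m)), x (γ + (k.val : ZMod m) + 1)} := by
        intro k; rw [hx'succ k]
      rw [hset j, hset k]
      exact hl.link_disjoint _ _ (hidx_inj j k hjk)
  · -- loopStates subset
    rintro s (⟨k, rfl⟩ | ⟨k, rfl⟩)
    · by_cases h : k = 0
      · subst h; simp only [hx', if_pos rfl]; exact mem_loopStates_x δ
      · simp only [hx', if_neg h]; exact mem_loopStates_x _
    · exact mem_loopStates_y _

end Chord

section Main

variable {n : ℕ}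

lemma range_comp_eq {A B C : Type*} {f : A → C} {g : B → C} {γ : A → B}
    (hsurj : Function.Surjective γ) (h : ∀ k, f k = g (γ k)) :
    Set.range f = Set.range g := by
  have hfg : f = g ∘ γ := funext h
  rw [hfg]
  exact hsurj.range_comp g

lemma main_aux [Fintype Ω] (Pl : Fin n → Setoid Ω) (F₁ F₂ : Setoid Ω)
    (h12 : OneSideConds Pl F₁ F₂) (h21 : OneSideConds Pl F₂ F₁) :
    ∀ m : ℕ, ∀ x y : ZMod m → Ω, IsLoop Pl F₁ m x y → Type2Irreducible F₁ x y →
      ∀ j, F₂.r (y j) (x (j + 1)) := by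
  obtain ⟨h12r, h12c, h12i⟩ := h12
  obtain ⟨h21r, h21c, h21i⟩ := h21
  intro m
  induction m using Nat.strong_induction_on with
  | _ m IH =>
  intro x y hloop ht2 j
  have hm2 := hloop.two_le
  haveI : NeZero m := ⟨by omega⟩
  by_cases hm3 : 3 ≤ m
  swap
  · -- m = 2 : directly from the F₂-cover of the loop
    have hm2e : m = 2 := by omega
    subst hm2e
    obtain ⟨q, e, k', hinj, hek', hC⟩ :=
      cover_full (h12c _ x y hloop) (pair_not_F2 hloop ht2 h21r) j
    haveI : NeZero q := ⟨by have := hC.two_le; omega⟩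
    have hq2 : q = 2 := by
      have hle := Fintype.card_le_of_injective e hinj
      have := hC.two_le
      simp only [ZMod.card] at hle
      omega
    subst hq2
    have hne : e (k' + 1) ≠ e k' := fun h => (by decide : ∀ a : ZMod 2, a + 1 ≠ a) k' (hinj h)
    have hsucc : e (k' + 1) = e k' + 1 := by
      have hh : ∀ a b : ZMod 2, a ≠ b → a = b + 1 := by decide
      exact hh _ _ hne
    have hlink := hC.link k'
    show F₂.r (y j) (x (j + 1))
    rw [← hek', ← hsucc]
    exact hlink
  · by_cases hA : ∃ γ δ : ZMod m, δ ≠ γ ∧ ckcRel Pl (x γ) (x δ)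
    · -- Case A : a CKC coincidence exists; cut the loop into two shorter loops
      obtain ⟨γ, δ, hne, hck⟩ := hA
      have hne2 : δ ≠ γ + 1 := fun h => hloop.ckc_ne γ (h ▸ hck)
      have hne3 : γ ≠ δ + 1 := fun h => hloop.ckc_ne δ (h ▸ ckc_symm hck)
      obtain ⟨hd2, hdm, x1, y1, hL1, hsub1, hspec1⟩ := chord_loop hloop hck hne hne2
      obtain ⟨hd2', hdm', x2, y2, hL2, hsub2, hspec2⟩ :=
        chord_loop hloop (ckc_symm hck) (Ne.symm hne) hne3
      have G1 := IH _ hdm x1 y1 hL1 (t2_mono hsub1 ht2)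
      have G2 := IH _ hdm' x2 y2 hL2 (t2_mono hsub2 ht2)
      set d1 := (δ - γ).val with hd1def
      set d2 := (γ - δ).val with hd2def
      have hsum : d1 + d2 = m := by
        have hz : (((d1 + d2 : ℕ)) : ZMod m) = 0 := by
          push_cast
          rw [ZMod.natCast_rightInverse (δ - γ), ZMod.natCast_rightInverse (γ - δ)]
          ring
        have hdvd : m ∣ d1 + d2 := (ZMod.natCast_eq_zero_iff _ m).1 hz
        obtain ⟨c, hc⟩ := hdvd
        have hub : d1 + d2 < 2 * m := by omega
        have hlb : 0 < d1 + d2 := by omega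
        rcases c with - | c
        · omega
        · rcases c with - | c
          · omega
          · exfalso
            have : m * (c + 1 + 1) ≥ m * 2 := Nat.mul_le_mul_left m (by omega)
            omega
      set t := (j - γ).val with htdef
      have htm : t < m := ZMod.val_lt _
      by_cases hcase : t < d1
      · have hk : ((t : ZMod d1)).val = t := ZMod.val_cast_of_lt hcase
        have hgoal := G1 ((t : ZMod d1))
        obtain ⟨hy1, hx1⟩ := hspec1 ((t : ZMod d1))
        rw [hy1, hx1, hk] at hgoal
        have hj : γ + ((t : ℕ) : ZMod m) = j := by
          rw [htdef, ZMod.natCast_rightInverse (j - γ)]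
          ring
        rwa [hj] at hgoal
      · push_neg at hcase
        have htd : t - d1 < d2 := by omega
        have hk : (((t - d1 : ℕ) : ZMod d2)).val = t - d1 := ZMod.val_cast_of_lt htd
        have hgoal := G2 (((t - d1 : ℕ) : ZMod d2))
        obtain ⟨hy2, hx2⟩ := hspec2 (((t - d1 : ℕ) : ZMod d2))
        rw [hy2, hx2, hk] at hgoal
        have hj : δ + ((t - d1 : ℕ) : ZMod m) = j := by
          have e1 : ((t : ℕ) : ZMod m) = j - γ := ZMod.natCast_rightInverse _
          have e2 : ((d1 : ℕ) : ZMod m) = δ - γ := ZMod.natCast_rightInverse _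
          have e3 : ((t - d1 : ℕ) : ZMod m) = ((t : ℕ) : ZMod m) - ((d1 : ℕ) : ZMod m) := by
            push_cast [Nat.cast_sub hcase]
            ring
          rw [e3, e1, e2]
          ring
        rwa [hj] at hgoal
    · -- Case B : all pair-CKCs are distinct
      have hB : ∀ γ δ : ZMod m, ckcRel Pl (x γ) (x δ) → δ = γ := by
        intro γ δ hck
        by_contra hne
        exact hA ⟨γ, δ, hne, hck⟩
      -- the F₂-cover of the loop is a single full-length loop
      obtain ⟨q, e, k0, hinjE, he0, hC⟩ :=
        cover_full (h12c _ x y hloop) (pair_not_F2 hloop ht2 h21r) 0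
      obtain ⟨q', e', k1, hinjE', he1, hW⟩ :=
        cover_full (h21c _ _ _ hC) (fun k => pair_not_F1 hloop ht2 (e k)) 0
      obtain ⟨-, hsurj', -⟩ :=
        rigid hloop ht2 hW (fun k => e (e' k)) (fun k => Or.inl ⟨rfl, rfl⟩)
      have hsurjE : Function.Surjective e := by
        intro b
        obtain ⟨a, ha⟩ := hsurj' b
        exact ⟨e' a, ha⟩
      haveI : NeZero q := ⟨by have := hC.two_le; omega⟩
      have hqm : q = m := by
        have hle := Fintype.card_le_of_injective e hinjE
        have hge := Fintype.card_le_of_surjective e hsurjE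
        simp only [ZMod.card] at hle hge
        omega
      have hSeq : loopStates (x ∘ e) (y ∘ e) = loopStates x y := by
        unfold loopStates
        rw [range_comp_eq hsurjE (fun k => rfl) (f := x ∘ e) (g := x),
          range_comp_eq hsurjE (fun k => rfl) (f := y ∘ e) (g := y)]
      -- no strictly smaller F₂-loop exists
      have hNW : ∀ N : ℕ, ∀ (m' : ℕ) (u v : ZMod m' → Ω), IsLoop Pl F₂ m' u v →
          loopStates u v ⊂ loopStates x y → (loopStates u v).ncard ≤ N → False := by
        intro N
        induction N with
        | zero =>
          intro m' u v hl' hss hcard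
          have hne' : (loopStates u v).Nonempty := ⟨u 0, Or.inl ⟨0, rfl⟩⟩
          have := hne'.ncard_pos (Set.toFinite _)
          omega
        | succ N ihN =>
          intro m' u v hl' hss hcard
          -- pair form
          have hbase : ∀ {s : Ω}, s ∈ loopStates x y →
              ∃ a, (s = x a ∨ s = y a) ∧ ckcRel Pl s (x a) := by
            rintro s (⟨a, rfl⟩ | ⟨a, rfl⟩)
            · exact ⟨a, Or.inl rfl, ckc_refl _⟩
            · exact ⟨a, Or.inr rfl, ckc_symm (hloop.pair_ckc a)⟩
          have hpf : ∀ k, ∃ g, (u k = x g ∧ v k = y g) ∨ (u k = y g ∧ v k = x g) := by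
            intro k
            obtain ⟨a, hua, hcka⟩ := hbase (hss.subset (mem_loopStates_x (x := u) (y := v) k))
            obtain ⟨b, hvb, hckb⟩ := hbase (hss.subset (mem_loopStates_y (x := u) (y := v) k))
            have hab : b = a :=
              hB a b (ckc_trans (ckc_symm hcka) (ckc_trans (hl'.pair_ckc k) hckb))
            subst hab
            rcases hua with hua | hua <;> rcases hvb with hvb | hvb
            · exact absurd (hua.trans hvb.symm) (hl'.pair_ne k)
            · exact ⟨b, Or.inl ⟨hua, hvb⟩⟩
            · exact ⟨b, Or.inr ⟨hua, hvb⟩⟩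
            · exact absurd (hua.trans hvb.symm) (hl'.pair_ne k)
          set γf : ZMod m' → ZMod m := fun k => (hpf k).choose with hγfdef
          have hγ : ∀ k, (u k = x (γf k) ∧ v k = y (γf k)) ∨
              (u k = y (γf k) ∧ v k = x (γf k)) := fun k => (hpf k).choose_spec
          by_cases hred : ∃ (m'' : ℕ) (u'' v'' : ZMod m'' → Ω),
              IsLoop Pl F₂ m'' u'' v'' ∧ loopStates u'' v'' ⊂ loopStates u v
          · obtain ⟨m'', u'', v'', hl'', hss''⟩ := hred
            have hcard'' : (loopStates u'' v'').ncard < (loopStates u v).ncard :=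
              Set.ncard_lt_ncard hss'' (Set.toFinite _)
            exact ihN m'' u'' v'' hl'' (lt_trans hss'' hss) (by omega)
          · have hirr : IsIrreducible Pl F₂ u v := hred
            have hm'2 := hl'.two_le
            by_cases hm'3 : 3 ≤ m'
            · obtain ⟨hlF₁, -⟩ := h21i m' u v hl' hirr hm'3
              obtain ⟨hm'm, hsurjγ, hor⟩ := rigid hloop ht2 hlF₁ γf hγ
              apply hss.ne
              rcases hor with hfwd | hbwd
              · unfold loopStates
                rw [range_comp_eq hsurjγ (fun k => (hfwd k).1.1),
                  range_comp_eq hsurjγ (fun k => (hfwd k).1.2)]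
              · unfold loopStates
                rw [range_comp_eq hsurjγ (fun k => (hbwd k).1.1),
                  range_comp_eq hsurjγ (fun k => (hbwd k).1.2)]
                exact Set.union_comm _ _
            · have hm'2e : m' = 2 := by omega
              subst hm'2e
              have hNT' : ∀ k, ¬ F₁.r (u k) (v k) := by
                intro k hF
                rcases hγ k with ⟨h1, h2⟩ | ⟨h1, h2⟩
                · rw [h1, h2] at hF
                  exact pair_not_F1 hloop ht2 _ hF
                · rw [h1, h2] at hF
                  exact pair_not_F1 hloop ht2 _ (F₁.iseqv.symm hF)
              obtain ⟨q'', e'', k2, hinj'', he2, hW''⟩ :=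
                cover_full (h21c _ _ _ hl') hNT' 0
              obtain ⟨hq''m, -, -⟩ :=
                rigid hloop ht2 hW'' (fun k => γf (e'' k)) (fun k => hγ (e'' k))
              haveI : NeZero q'' := ⟨by have := hW''.two_le; omega⟩
              have hle := Fintype.card_le_of_injective e'' hinj''
              simp only [ZMod.card] at hle
              omega
      -- C is irreducible, hence also an F₁-loop in the same order
      have hirrC : IsIrreducible Pl F₂ (x ∘ e) (y ∘ e) := by
        rintro ⟨m', u, v, hl', hss⟩
        rw [hSeq] at hss
        exact hNW _ m' u v hl' hss le_rfl
      obtain ⟨hCF₁, -⟩ := h21i q (x ∘ e) (y ∘ e) hC hirrC (by omega)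
      obtain ⟨-, hsurjE2, hor⟩ :=
        rigid hloop ht2 hCF₁ e (fun k => Or.inl ⟨rfl, rfl⟩)
      rcases hor with hfwd | hbwd
      · obtain ⟨k, hk⟩ := hsurjE2 j
        have hlink := hC.link k
        have hsucc := (hfwd k).2
        show F₂.r (y j) (x (j + 1))
        rw [← hk, ← hsucc]
        exact hlink
      · exfalso
        have := (hbwd 0).1.1
        exact loop_x_ne_y hloop _ _ this
  done

end Main

/-- **Claim (type-2 irreducible `F₁`-loops are `F₂`-loops).**
Under the two-sided equivalence conditions, every type-2 irreducible `F₁`-loop is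
also an `F₂`-loop: `ω_{j+1} ∈ F₂(ω̄_j)` for every `j` (indices cyclic). -/
theorem type2_irreducible_is_other_loop
    {Ω : Type} [Fintype Ω] [Nonempty Ω] {n : ℕ} (hn : 2 ≤ n)
    (Pl : Fin n → Setoid Ω) (F₁ F₂ : Setoid Ω)
    (h12 : OneSideConds Pl F₁ F₂) (h21 : OneSideConds Pl F₂ F₁)
    (m : ℕ) (x y : ZMod m → Ω)
    (hloop : IsLoop Pl F₁ m x y) (ht2 : Type2Irreducible F₁ x y) :
    ∀ j, F₂.r (y j) (x (j + 1)) := by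
  exact main_aux Pl F₁ F₂ h12 h21 m x y hloop ht2

end Oracles
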